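/- arXiv:1511.00885 — 4 statements merged into one kernel-verified Lean document; each statement's English description precedes it below -/
import Mathlib

section
/- For every ε > 0, the family of matrices B(k) = [[1,1],[e^{2πiτk},0]] with 0 ≤ k < ε is irreducible over ℂ: the only subspaces of ℂ² invariant under all B(k) with 0 ≤ k < ε are {0} and ℂ². -/
open Complex
open scoped Matrix

/-!
All `B(k)` share the first row `(1, 1)`, so `B(k) - B(k')` is `(c - c') e₁ e₀ᵀ`, where `c, c'` are
the phases. If `c ≠ c'`, a nonzero invariant subspace therefore contains `e₁` (through that
difference, or because it is `ℂ e₁` already), hence also `B(k) e₁ = e₀`, so it is everything.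
Comparing `B(0)` with a `B(k)` for small `k > 0` suffices: `0 < τk < 1` makes its phase `≠ 1`.
-/

theorem Complex.exp_two_pi_mul_I_mul_ne_one {x : ℝ} (h0 : 0 < x) (h1 : x < 1) :
    exp (2 * Real.pi * I * x) ≠ 1 := by
  rw [Ne, exp_eq_one_iff]
  rintro ⟨n, hn⟩
  have h2piI : (2 * Real.pi * I : ℂ) ≠ 0 := by simp [Real.pi_ne_zero]
  have hx : x = n := by
    rw [mul_comm (n : ℂ)] at hn
    exact_mod_cast mul_left_cancel₀ h2piI hn
  have hn0 : (0 : ℤ) < n := by exact_mod_cast hx ▸ h0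
  have hn1 : n < (1 : ℤ) := by exact_mod_cast hx ▸ h1
  omega

section FibonacciMatrix

variable {K : Type*} [Field K]

theorem fibonacci_mulVec_sub_mulVec (a b : K) (v : Fin 2 → K) :
    !![1, 1; a, 0] *ᵥ v - !![1, 1; b, 0] *ᵥ v = Pi.single 1 ((a - b) * v 0) := by
  ext i
  fin_cases i <;> simp [dotProduct, Fin.sum_univ_two, sub_mul]

theorem fibonacci_mulVec_single_one (a : K) :
    !![1, 1; a, 0] *ᵥ Pi.single 1 1 = Pi.single 0 1 := by
  ext i
  fin_cases i <;> simp [Matrix.mulVec, dotProduct, Fin.sum_univ_two]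

variable {p : Submodule K (Fin 2 → K)} {a b : K}

theorem single_one_mem_of_fibonacci_invariant (hab : a ≠ b)
    (ha : ∀ v ∈ p, !![1, 1; a, 0] *ᵥ v ∈ p) (hb : ∀ v ∈ p, !![1, 1; b, 0] *ᵥ v ∈ p)
    (hp : p ≠ ⊥) : Pi.single 1 1 ∈ p := by
  obtain ⟨v, hv, hv_ne⟩ := Submodule.exists_mem_ne_zero_of_ne_bot hp
  by_cases hv0 : v 0 = 0
  · have hv1 : v 1 ≠ 0 := fun hv1 => hv_ne (by ext i; fin_cases i <;> assumption)
    have hv_eq : v = v 1 • Pi.single 1 1 := by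
      ext i; fin_cases i <;> simp [hv0]
    rw [hv_eq] at hv
    simpa [hv1] using p.smul_mem (v 1)⁻¹ hv
  · have hdiff := p.sub_mem (ha v hv) (hb v hv)
    rw [fibonacci_mulVec_sub_mulVec] at hdiff
    have hc : (a - b) * v 0 ≠ 0 := mul_ne_zero (sub_ne_zero.2 hab) hv0
    have := p.smul_mem ((a - b) * v 0)⁻¹ hdiff
    rwa [← Pi.single_smul, smul_eq_mul, inv_mul_cancel₀ hc] at this

theorem eq_bot_or_eq_top_of_fibonacci_invariant (hab : a ≠ b)
    (ha : ∀ v ∈ p, !![1, 1; a, 0] *ᵥ v ∈ p) (hb : ∀ v ∈ p, !![1, 1; b, 0] *ᵥ v ∈ p) :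
    p = ⊥ ∨ p = ⊤ := by
  refine or_iff_not_imp_left.2 fun hp => ?_
  have he₁ := single_one_mem_of_fibonacci_invariant hab ha hb hp
  have he₀ : Pi.single 0 1 ∈ p := fibonacci_mulVec_single_one a ▸ ha _ he₁
  rw [eq_top_iff, ← (Pi.basisFun K (Fin 2)).span_eq, Submodule.span_le]
  rintro _ ⟨i, rfl⟩
  fin_cases i <;> simpa

end FibonacciMatrix

/-- For every `ε > 0`, the family of Fibonacci Fourier matrices
`B(k) = [[1,1],[e^{2πiτk},0]]`, `0 ≤ k < ε`, is irreducible over `ℂ`: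
the only subspaces of `ℂ²` invariant under all `B(k)` with `0 ≤ k < ε`
are `{0}` and `ℂ²`. Here `τ = (1+√5)/2`. -/
theorem fibonacci_fourier_matrix_family_irreducible :
    ∀ ε : ℝ, 0 < ε →
      ∀ p : Submodule ℂ (Fin 2 → ℂ),
        (∀ k : ℝ, 0 ≤ k → k < ε → ∀ v ∈ p,
          Matrix.mulVec
            (!![1, 1;
                Complex.exp (2 * Real.pi * Complex.I *
                  (((1 + Real.sqrt 5) / 2 : ℝ) : ℂ) * (k : ℂ)), 0]) v ∈ p) →
        p = ⊥ ∨ p = ⊤ := by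
  intro ε hε p hp
  set k := min ε 1 / 2 with hk
  have hk0 : 0 < k := by positivity
  have hkε : k < ε := by rw [hk]; linarith [min_le_left ε 1]
  have hk1 : k ≤ 1 / 2 := by rw [hk]; linarith [min_le_right ε 1]
  have hphase : exp (2 * Real.pi * I * ((Real.goldenRatio * k : ℝ) : ℂ)) ≠ 1 :=
    exp_two_pi_mul_I_mul_ne_one (by positivity)
      (by nlinarith [Real.goldenRatio_lt_two, Real.goldenRatio_pos])
  refine eq_bot_or_eq_top_of_fibonacci_invariant hphase.symm (fun v hv => ?_)
    (fun v hv => ?_)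
  · simpa using hp 0 le_rfl hε v hv
  · simpa [mul_assoc] using hp k hk0.le hkε v hv
end

section
/- Suppose functions I_aa, I_ab, I_ba, I_bb : ℝ → ℂ satisfy, for all k in a set F closed under multiplication by τ, the relations I_aa(k) = τ⁻²(I_aa(τk)+I_ab(τk)+I_ba(τk)+I_bb(τk)), I_ab(k) = τ⁻² e^{−2πiτk}(I_aa(τk)+I_ba(τk)), I_ba(k) = τ⁻² e^{2πiτk}(I_aa(τk)+I_ab(τk)), I_bb(k) = τ⁻² I_aa(τk). Then the determinant of the Hermitian matrix 𝓘(k) = [[I_aa(k), I_ab(k)],[I_ba(k), I_bb(k)]] satisfies det(𝓘(τk)) = τ⁴ det(𝓘(k)) for all k ∈ F. Consequently, if det(𝓘(·)) is bounded on the orbit {τⁿ k : n ∈ ℕ} for each k ∈ F, then det(𝓘(k)) = 0 for all k ∈ F. -/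
/-!
Writing `s = τ⁻²` and `a, b, c, d` for the entries of `𝓘(τk)`, the relations say that `𝓘(k)` is
`!![s(a+b+c+d), s e(a+c); s e⁻¹(a+b), s a]` with `e = exp(-2πiτk)`. Expanding its determinant,
the phase factors cancel and so do all the terms in `a²`, `ab` and `ac`, leaving
`det 𝓘(k) = s² (ad - bc) = τ⁻⁴ det 𝓘(τk)`. Iterating along the orbit gives
`det 𝓘(τⁿk) = τ⁴ⁿ det 𝓘(k)`, which is unbounded unless `det 𝓘(k) = 0`, since `τ > 1`.
-/

theorem Matrix.det_fin_two_renormalise {R : Type*} [CommRing R] (s e e' a b c d : R)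
    (he : e * e' = 1) :
    !![s * (a + b + c + d), s * e * (a + c); s * e' * (a + b), s * a].det =
      s ^ 2 * !![a, b; c, d].det := by
  simp only [Matrix.det_fin_two_of]
  linear_combination -s ^ 2 * (a + c) * (a + b) * he

theorem pow_mul_mem_of_forall_mul_mem {M : Type*} [Monoid M] {S : Set M} {t : M}
    (hS : ∀ k ∈ S, t * k ∈ S) {k : M} (hk : k ∈ S) (n : ℕ) : t ^ n * k ∈ S := by
  induction n with
  | zero => simpa using hk
  | succ n ih => simpa [pow_succ', mul_assoc] using hS _ ih

theorem eq_zero_of_norm_le_of_succ_eq_smul {𝕜 E : Type*} [NormedField 𝕜]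
    [NormedAddCommGroup E] [NormedSpace 𝕜 E] {u : ℕ → E} {μ : 𝕜} (hμ : 1 < ‖μ‖)
    (hu : ∀ n, u (n + 1) = μ • u n) {C : ℝ} (hC : ∀ n, ‖u n‖ ≤ C) : u 0 = 0 := by
  have hnorm : ∀ n, ‖u n‖ = ‖μ‖ ^ n * ‖u 0‖ := by
    intro n
    induction n with
    | zero => simp
    | succ n ih => rw [hu, norm_smul, ih, pow_succ']; ring
  by_contra hne
  have hpos : 0 < ‖u 0‖ := norm_pos_iff.mpr hne
  obtain ⟨n, hn⟩ := pow_unbounded_of_one_lt (C / ‖u 0‖) hμ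
  have := hC n
  rw [hnorm, ← le_div_iff₀ hpos] at this
  linarith

/-- Renormalisation relations for the Fibonacci intensity matrix: if the
functions `I_αβ` satisfy the stated relations on a set `F` closed under
multiplication by `τ = (1+√5)/2`, then `det 𝓘(τk) = τ⁴ det 𝓘(k)` on `F`;
consequently, if `det 𝓘` is bounded on each orbit `{τⁿ k : n ∈ ℕ}`, then
`det 𝓘(k) = 0` for all `k ∈ F`. -/
theorem fibonacci_intensity_det_scaling
    (Iaa Iab Iba Ibb : ℝ → ℂ) (F : Set ℝ)
    (hF : ∀ k ∈ F, ((1 + Real.sqrt 5) / 2) * k ∈ F)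
    (τdef : ℝ) (hτ : τdef = (1 + Real.sqrt 5) / 2)
    (𝓘 : ℝ → Matrix (Fin 2) (Fin 2) ℂ)
    (h𝓘 : ∀ k, 𝓘 k = !![Iaa k, Iab k; Iba k, Ibb k])
    (haa : ∀ k ∈ F, Iaa k = (τdef : ℂ)⁻¹ ^ 2 *
      (Iaa (τdef * k) + Iab (τdef * k) + Iba (τdef * k) + Ibb (τdef * k)))
    (hab : ∀ k ∈ F, Iab k = (τdef : ℂ)⁻¹ ^ 2 *
      Complex.exp (-(2 * Real.pi * Complex.I * τdef * k)) *
      (Iaa (τdef * k) + Iba (τdef * k)))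
    (hba : ∀ k ∈ F, Iba k = (τdef : ℂ)⁻¹ ^ 2 *
      Complex.exp (2 * Real.pi * Complex.I * τdef * k) *
      (Iaa (τdef * k) + Iab (τdef * k)))
    (hbb : ∀ k ∈ F, Ibb k = (τdef : ℂ)⁻¹ ^ 2 * Iaa (τdef * k)) :
    (∀ k ∈ F, (𝓘 (τdef * k)).det = (τdef : ℂ) ^ 4 * (𝓘 k).det) ∧
    ((∀ k ∈ F, ∃ C : ℝ, ∀ n : ℕ, ‖(𝓘 (τdef ^ n * k)).det‖ ≤ C) →
      ∀ k ∈ F, (𝓘 k).det = 0) := by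
  have hτ1 : 1 < τdef := hτ ▸ Real.one_lt_goldenRatio
  have hτ0 : (τdef : ℂ) ≠ 0 := by exact_mod_cast (zero_lt_one.trans hτ1).ne'
  have scaling : ∀ k ∈ F, (𝓘 (τdef * k)).det = (τdef : ℂ) ^ 4 * (𝓘 k).det := by
    intro k hk
    rw [h𝓘 k, haa k hk, hab k hk, hba k hk, hbb k hk, Matrix.det_fin_two_renormalise,
      ← h𝓘, ← mul_assoc, ← pow_mul, inv_pow, mul_inv_cancel₀ (pow_ne_zero _ hτ0), one_mul]
    rw [Complex.exp_neg]
    exact inv_mul_cancel₀ (Complex.exp_ne_zero _)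
  refine ⟨scaling, fun hbdd k hk => ?_⟩
  obtain ⟨C, hC⟩ := hbdd k hk
  have orbit_det_eq_zero := eq_zero_of_norm_le_of_succ_eq_smul
    (u := fun n => (𝓘 (τdef ^ n * k)).det) (μ := (τdef : ℂ) ^ 4) ?_ (fun n => ?_) hC
  · simpa using orbit_det_eq_zero
  · rw [norm_pow, Complex.norm_real, Real.norm_of_nonneg (zero_le_one.trans hτ1.le)]
    exact one_lt_pow₀ hτ1 four_ne_zero
  · rw [pow_succ', mul_assoc, smul_eq_mul]
    exact scaling _ (pow_mul_mem_of_forall_mul_mem (hτ ▸ hF) hk n)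
end

section
/- Let η₊ : ℤ → ℝ satisfy η₊(2n) = η₊(n) and η₊(2n+1) = (1/2)(η₊(n) + η₊(n+1)) for all n ∈ ℤ. Then η₊ is constant: η₊(n) = η₊(0) for all n ∈ ℤ. -/
/-!
Writing `d m = η (m + 1) - η m`, the two relations give `d m = d (m / 2) / 2` (floor division),
whatever the parity of `m`. The relation at `n = 0` and `n = -1` gives `d 0 = d (-1) = 0`, and
iterating `m ↦ m / 2` reaches `0` or `-1` from every integer, so `d` vanishes identically.
-/

theorem Int.induction_on_ediv_two {P : ℤ → Prop} (zero : P 0) (neg_one : P (-1))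
    (step : ∀ m, P (m / 2) → P m) (m : ℤ) : P m :=
  if hm : m = 0 ∨ m = -1 then by rcases hm with rfl | rfl <;> assumption
  else step m (Int.induction_on_ediv_two zero neg_one step (m / 2))
termination_by m.natAbs
decreasing_by omega

namespace ThueMorse

variable {K : Type*} [Field K] [NeZero (2 : K)] {η : ℤ → K}

theorem sub_succ_eq_half_sub_succ_ediv_two (h1 : ∀ n : ℤ, η (2 * n) = η n)
    (h2 : ∀ n : ℤ, η (2 * n + 1) = (1 / 2) * (η n + η (n + 1))) (m : ℤ) :
    η (m + 1) - η m = (1 / 2) * (η (m / 2 + 1) - η (m / 2)) := by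
  obtain ⟨n, rfl | rfl⟩ := Int.even_or_odd' m
  · rw [Int.mul_ediv_cancel_left n two_ne_zero, h2, h1]
    field_simp
    ring
  · have hdiv : (2 * n + 1) / 2 = n := by omega
    rw [hdiv, show 2 * n + 1 + 1 = 2 * (n + 1) by ring, h1, h2]
    field_simp
    ring

theorem apply_one_eq_apply_zero (h2 : ∀ n : ℤ, η (2 * n + 1) = (1 / 2) * (η n + η (n + 1))) :
    η 1 = η 0 := by
  have h := h2 0
  norm_num at h
  field_simp at h
  linear_combination h

theorem apply_neg_one_eq_apply_zero
    (h2 : ∀ n : ℤ, η (2 * n + 1) = (1 / 2) * (η n + η (n + 1))) :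
    η (-1) = η 0 := by
  have h := h2 (-1)
  norm_num at h
  field_simp at h
  linear_combination h

theorem apply_succ_eq_apply (h1 : ∀ n : ℤ, η (2 * n) = η n)
    (h2 : ∀ n : ℤ, η (2 * n + 1) = (1 / 2) * (η n + η (n + 1))) (m : ℤ) :
    η (m + 1) = η m := by
  refine sub_eq_zero.mp <| Int.induction_on_ediv_two (P := fun m ↦ η (m + 1) - η m = 0)
    ?_ ?_ (fun m hm ↦ ?_) m
  · simp [apply_one_eq_apply_zero h2]
  · simp [apply_neg_one_eq_apply_zero h2]
  · rw [sub_succ_eq_half_sub_succ_ediv_two h1 h2, hm, mul_zero]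

end ThueMorse

/-- Thue–Morse renormalisation, even sector: any `η₊ : ℤ → ℝ` with
`η₊(2n) = η₊(n)` and `η₊(2n+1) = (η₊(n) + η₊(n+1))/2` is constant. -/
theorem thue_morse_even_solution_constant (η : ℤ → ℝ)
    (h1 : ∀ n : ℤ, η (2 * n) = η n)
    (h2 : ∀ n : ℤ, η (2 * n + 1) = (1 / 2) * (η n + η (n + 1))) :
    ∀ n : ℤ, η n = η 0 := by
  have hperiodic : Function.Periodic η 1 := ThueMorse.apply_succ_eq_apply h1 h2
  intro n
  simpa using hperiodic.int_mul_eq n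
end

section
/- Let ν : ℤ[τ] → ℝ (τ = (1+√5)/2 golden ratio, ℤ[τ] the ring of integers of ℚ(√5)) be given for each pair of indices (α,β) ∈ {a,b}² as functions ν_{αβ} satisfying: (i) ν_{αβ}(z) = 0 whenever z ∉ S, where S is a fixed subset of ℤ[τ] with S ∩ [−τ², τ²] ⊆ {0, ±1, ±τ, ±(τ+1), ±1/τ}; (ii) the symmetry ν_{αβ}(−z) = ν_{βα}(z); (iii) the renormalisation relations ν_aa(z) = τ⁻¹(ν_aa(z/τ)+ν_ab(z/τ)+ν_ba(z/τ)+ν_bb(z/τ)), ν_ab(z) = τ⁻¹(ν_aa(z/τ − 1)+ν_ba(z/τ − 1)), ν_ba(z) = τ⁻¹(ν_aa(z/τ + 1)+ν_ab(z/τ + 1)), ν_bb(z) = τ⁻¹ ν_aa(z/τ), where any term whose argument lies outside S is zero. Then ν_ab(1/τ) = 0. More specifically, the relations force ν_bb(1/τ) = ν_ba(1/τ) = ν_aa(1/τ) = 0 and ν_ab(1/τ) = τ⁻¹ ν_ab(1/τ), hence ν_ab(1/τ) = 0. -/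
/-!
Write `φ` for `τ`. Since `φ² = φ + 1`, dividing `1/φ = φ - 1` by `φ` gives `2 - φ`, and adding `1`
gives `3 - φ`. These two points lie in the gaps `(0, 1/φ)` and `(1, φ)` of the admissible set,
so every correlation vanishes there. The renormalisation relations at `1/φ` then give
`ν_bb = ν_ba = ν_aa = 0`, while `1/φ/φ - 1 = -1/φ` and the symmetry turn the relation for `ν_ab`
into `ν_ab(1/φ) = φ⁻¹ ν_ab(1/φ)`; as `φ > 1`, this forces `ν_ab(1/φ) = 0`.
-/

open Real Set
open scoped goldenRatio

theorem one_div_goldenRatio : 1 / φ = φ - 1 := by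
  rw [one_div, inv_goldenRatio, ← one_sub_goldenConj]
  ring

theorem one_div_goldenRatio_div_goldenRatio : 1 / φ / φ = 2 - φ := by
  rw [one_div_goldenRatio, div_eq_iff goldenRatio_ne_zero]
  linear_combination goldenRatio_sq

theorem three_halves_lt_goldenRatio : 3 / 2 < φ := by
  nlinarith [goldenRatio_sq, one_lt_goldenRatio]

theorem two_sub_goldenRatio_mem_Ioo : 2 - φ ∈ Ioo 0 (1 / φ) := by
  rw [one_div_goldenRatio]
  constructor <;> linarith [goldenRatio_lt_two, three_halves_lt_goldenRatio]

theorem three_sub_goldenRatio_mem_Ioo : 3 - φ ∈ Ioo 1 φ := by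
  constructor <;> linarith [goldenRatio_lt_two, three_halves_lt_goldenRatio]

theorem notMem_of_mem_Ioo_gaps {S : Set ℝ}
    (hS : S ∩ Icc (-φ ^ 2) (φ ^ 2) ⊆
      ({0, 1, -1, φ, -φ, φ + 1, -(φ + 1), 1 / φ, -(1 / φ)} : Set ℝ))
    {z : ℝ} (hz : z ∈ Ioo 0 (1 / φ) ∪ Ioo 1 φ) : z ∉ S := by
  have hinv := one_div_goldenRatio
  have hsq := goldenRatio_sq
  have hgt := one_lt_goldenRatio
  have hlt := goldenRatio_lt_two
  intro hzS
  have hzIcc : z ∈ Icc (-φ ^ 2) (φ ^ 2) := by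
    rcases hz with ⟨hz₀, hz₁⟩ | ⟨hz₀, hz₁⟩ <;> constructor <;> linarith
  have hmem := hS ⟨hzS, hzIcc⟩
  simp only [mem_insert_iff, mem_singleton_iff] at hmem
  rcases hz with ⟨hz₀, hz₁⟩ | ⟨hz₀, hz₁⟩ <;>
    rcases hmem with h | h | h | h | h | h | h | h | h <;> linarith

/-- Key computation in Proposition 3.4 for the Fibonacci chain: under the
exact renormalisation relations, the symmetry relation, and the support
condition (with `S ∩ [−τ², τ²] ⊆ {0, ±1, ±τ, ±(τ+1), ±1/τ}`), all four
pair correlation coefficients vanish at `z = 1/τ`; in particular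
`ν_ab(1/τ) = τ⁻¹ ν_ab(1/τ)`, forcing `ν_ab(1/τ) = 0`.
Here `τ = (1+√5)/2`. -/
theorem fibonacci_correlations_vanish_at_inv_tau
    (τ : ℝ) (hτ : τ = (1 + Real.sqrt 5) / 2)
    (νaa νab νba νbb : ℝ → ℝ) (S : Set ℝ)
    (hS : S ∩ Set.Icc (-τ ^ 2) (τ ^ 2) ⊆
      ({0, 1, -1, τ, -τ, τ + 1, -(τ + 1), 1 / τ, -(1 / τ)} : Set ℝ))
    (hsupp : ∀ z : ℝ, z ∉ S →
      νaa z = 0 ∧ νab z = 0 ∧ νba z = 0 ∧ νbb z = 0)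
    (hsym : ∀ z : ℝ, νaa (-z) = νaa z ∧ νbb (-z) = νbb z ∧
      νab (-z) = νba z ∧ νba (-z) = νab z)
    (haa : ∀ z : ℝ, νaa z = τ⁻¹ * (νaa (z / τ) + νab (z / τ) +
      νba (z / τ) + νbb (z / τ)))
    (hab : ∀ z : ℝ, νab z = τ⁻¹ * (νaa (z / τ - 1) + νba (z / τ - 1)))
    (hba : ∀ z : ℝ, νba z = τ⁻¹ * (νaa (z / τ + 1) + νab (z / τ + 1)))
    (hbb : ∀ z : ℝ, νbb z = τ⁻¹ * νaa (z / τ)) :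
    νbb (1 / τ) = 0 ∧ νba (1 / τ) = 0 ∧ νaa (1 / τ) = 0 ∧
    νab (1 / τ) = τ⁻¹ * νab (1 / τ) ∧ νab (1 / τ) = 0 := by
  obtain rfl : τ = φ := hτ
  have hq := one_div_goldenRatio_div_goldenRatio
  obtain ⟨haa₀, hab₀, hba₀, hbb₀⟩ :=
    hsupp _ (notMem_of_mem_Ioo_gaps hS (Or.inl two_sub_goldenRatio_mem_Ioo))
  obtain ⟨haa₁, hab₁, -, -⟩ : νaa (1 / φ / φ + 1) = 0 ∧ νab (1 / φ / φ + 1) = 0 ∧ _ := by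
    refine hsupp _ (notMem_of_mem_Ioo_gaps hS (Or.inr ?_))
    convert three_sub_goldenRatio_mem_Ioo using 1
    rw [hq]; ring
  have hbb_zero : νbb (1 / φ) = 0 := by rw [hbb, hq, haa₀, mul_zero]
  have hba_zero : νba (1 / φ) = 0 := by rw [hba, haa₁, hab₁, add_zero, mul_zero]
  have haa_zero : νaa (1 / φ) = 0 := by rw [haa, hq, haa₀, hab₀, hba₀, hbb₀]; ring
  have hfix : νab (1 / φ) = φ⁻¹ * νab (1 / φ) :=
    calc νab (1 / φ) = φ⁻¹ * (νaa (1 / φ / φ - 1) + νba (1 / φ / φ - 1)) := hab _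
      _ = φ⁻¹ * (νaa (-(1 / φ)) + νba (-(1 / φ))) := by
        rw [hq, one_div_goldenRatio]; ring_nf
      _ = φ⁻¹ * νab (1 / φ) := by rw [(hsym _).1, (hsym _).2.2.2, haa_zero, zero_add]
  have hinv_ne_one : φ⁻¹ ≠ 1 := (inv_lt_one_of_one_lt₀ one_lt_goldenRatio).ne
  exact ⟨hbb_zero, hba_zero, haa_zero, hfix,
    (mul_left_eq_self₀.1 hfix.symm).resolve_left hinv_ne_one⟩
end
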